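/- Let r be a positive integer with r ≡ 3 (mod 4) and let ω := ι(e₁)·ι(e₂)⋯ι(e_r) be the volume element of the Clifford algebra Cl(Q_r) of the quadratic form Q(v) = −‖v‖² on ℝ^r. Then there exists a unital ℝ-algebra homomorphism F : Cl(Q_r) → Cl(Q_r) such that F(ι(v)) = ω·ι(v) for all v ∈ ℝ^r, and the image of F is contained in the even subalgebra Cl⁰(Q_r). (Consequently every representation of the even Clifford algebra Cl⁰(Q_r) extends along F to a representation of the full Clifford algebra Cl(Q_r) when r ≡ 3 mod 4.) -/

import Mathlib

open CliffordAlgebra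

/-- The quadratic form `Q(v) = -‖v‖²` on the Euclidean space `ℝ^r`. -/
noncomputable def Qr (r : ℕ) : QuadraticForm ℝ (EuclideanSpace ℝ (Fin r)) :=
  -LinearMap.BilinMap.toQuadraticMap (innerₗ (EuclideanSpace ℝ (Fin r)))

/-- The standard orthonormal basis vectors of `ℝ^r`. -/
noncomputable def stdB (r : ℕ) (i : Fin r) : EuclideanSpace ℝ (Fin r) :=
  EuclideanSpace.single i 1

/-- The volume element `ω = ι(e₁)·ι(e₂)⋯ι(e_r)` of `Cl(Q_r)`. -/
noncomputable def vol (r : ℕ) : CliffordAlgebra (Qr r) :=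
  ((List.finRange r).map fun i => ι (Qr r) (stdB r i)).prod

/-!
The generators `ι(eᵢ)` anticommute and square to `-1`. Moving `ι(eⱼ)` across
`ω = ι(e₁)⋯ι(e_r)` therefore costs the sign `(-1)^(r-1)`, and reordering `ω·ω` costs
`(-1)^(r(r+1)/2)`; for `r ≡ 3 (mod 4)` both signs are `+1`, so `ω` is odd, central and squares
to `1`. Then `(ω·ι(v))² = ω²·ι(v)² = Q(v)`, so `v ↦ ω·ι(v)` lifts to an algebra map, whose
image is generated by the even elements `ω·ι(v)`.
-/

namespace CliffordAlgebra

variable {R M n : Type*} [CommRing R] [AddCommGroup M] [Module R M] {Q : QuadraticForm R M}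

theorem exists_algHom_ι_eq_mul_mem_even {ω : CliffordAlgebra Q} (hω : ω ∈ evenOdd Q 1)
    (hcomm : ∀ v, Commute ω (ι Q v)) (hsq : ω * ω = 1) :
    ∃ F : CliffordAlgebra Q →ₐ[R] CliffordAlgebra Q,
      (∀ v, F (ι Q v) = ω * ι Q v) ∧ ∀ x, F x ∈ even Q := by
  have hF : ∀ v, (LinearMap.mulLeft R ω ∘ₗ ι Q) v * (LinearMap.mulLeft R ω ∘ₗ ι Q) v =
      algebraMap R _ (Q v) := fun v => by
    rw [LinearMap.comp_apply, LinearMap.mulLeft_apply, mul_assoc, ← mul_assoc (ι Q v),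
      ← (hcomm v).eq, ← mul_assoc, ← mul_assoc, hsq, one_mul, ι_sq_scalar]
  let F := lift Q ⟨(LinearMap.mulLeft R ω).comp (ι Q), hF⟩
  have hFι : ∀ v, F (ι Q v) = ω * ι Q v := fun v => lift_ι_apply _ _ _
  refine ⟨F, hFι, fun x => ?_⟩
  induction x using CliffordAlgebra.induction with
  | algebraMap t => rw [AlgHom.commutes]; exact Subalgebra.algebraMap_mem _ t
  | ι v =>
    rw [hFι, ← SetLike.mem_coe, ← Subalgebra.coe_toSubmodule, even_toSubmodule]
    have h := SetLike.mul_mem_graded hω (ι_mem_evenOdd_one Q v)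
    rwa [show (1 + 1 : ZMod 2) = 0 from rfl] at h
  | mul a b ha hb => rw [map_mul]; exact mul_mem ha hb
  | add a b ha hb => rw [map_add]; exact add_mem ha hb

theorem commute_ι_of_basis {x : CliffordAlgebra Q} (b : Module.Basis n R M)
    (h : ∀ i, Commute x (ι Q (b i))) (v : M) : Commute x (ι Q v) :=
  LinearMap.congr_fun
    (b.ext (f₁ := (LinearMap.mulLeft R x).comp (ι Q))
      (f₂ := (LinearMap.mulRight R x).comp (ι Q)) h) v

theorem prod_map_ι_mem_evenOdd (e : n → M) (l : List n) :
    (l.map fun i => ι Q (e i)).prod ∈ evenOdd Q l.length := by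
  simpa using SetLike.list_prod_map_mem_graded l (fun _ => (1 : ZMod 2)) (fun i => ι Q (e i))
    fun i _ => ι_mem_evenOdd_one Q (e i)

variable [DecidableEq n] {e : n → M}

theorem ι_mul_prod_map_ι (he : Pairwise fun i j => Q.IsOrtho (e i) (e j)) (j : n) (l : List n) :
    ι Q (e j) * (l.map fun i => ι Q (e i)).prod =
      (-1 : R) ^ l.countP (· != j) • ((l.map fun i => ι Q (e i)).prod * ι Q (e j)) := by
  induction l with
  | nil => simp
  | cons a l ih =>
    rw [List.map_cons, List.prod_cons, List.countP_cons]
    by_cases h : a = j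
    · subst h
      conv_lhs => rw [ih]
      rw [mul_smul_comm, if_neg (by simp), add_zero, mul_assoc]
    · rw [← mul_assoc, ι_mul_ι_comm_of_isOrtho (he (Ne.symm h)), neg_mul, mul_assoc, ih]
      simp [h, pow_succ, mul_assoc]

theorem prod_map_ι_mul_self (he : Pairwise fun i j => Q.IsOrtho (e i) (e j)) {l : List n}
    (hl : l.Nodup) :
    (l.map fun i => ι Q (e i)).prod * (l.map fun i => ι Q (e i)).prod =
      algebraMap R _ ((-1) ^ l.length.choose 2 * (l.map fun i => Q (e i)).prod) := by
  induction l with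
  | nil => simp
  | cons a l ih =>
    obtain ⟨ha, hl⟩ := List.nodup_cons.mp hl
    have hsign : l.countP (· != a) = l.length :=
      List.countP_eq_length.mpr fun i hi => bne_iff_ne.mpr (ne_of_mem_of_not_mem hi ha)
    simp only [List.map_cons, List.prod_cons, List.length_cons, Nat.choose_succ_succ',
      Nat.choose_one_right]
    rw [← mul_assoc, ι_mul_prod_map_ι he, hsign, smul_mul_assoc, smul_mul_assoc,
      mul_assoc _ (ι Q (e a)) (ι Q (e a)), ι_sq_scalar, ← Algebra.commutes, mul_assoc, ih hl]
    rw [Algebra.smul_def, ← map_mul, ← map_mul, pow_add]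
    ring_nf

end CliffordAlgebra

section VolumeElement

variable {r : ℕ}

theorem Qr_stdB (i : Fin r) : Qr r (stdB r i) = -1 := by
  simp [Qr, stdB, LinearMap.BilinMap.toQuadraticMap_apply]

theorem pairwise_isOrtho_stdB : Pairwise fun i j => (Qr r).IsOrtho (stdB r i) (stdB r j) := by
  intro i j h
  rw [QuadraticMap.isOrtho_def]
  simp [Qr, stdB, LinearMap.BilinMap.toQuadraticMap_apply, EuclideanSpace.inner_single_left, h,
    h.symm]

theorem vol_mul_vol (r : ℕ) : vol r * vol r = algebraMap ℝ _ ((-1) ^ (r + 1).choose 2) := by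
  rw [vol, prod_map_ι_mul_self pairwise_isOrtho_stdB (List.nodup_finRange r)]
  simp [Qr_stdB, List.map_const', Nat.choose_succ_succ', ← pow_add, add_comm]

theorem vol_mul_vol_eq_one (hr : r % 4 = 3) : vol r * vol r = 1 := by
  have hchoose : Even ((r + 1).choose 2) := by
    obtain ⟨k, rfl⟩ : ∃ k, r = 4 * k + 3 := ⟨r / 4, by omega⟩
    rw [Nat.choose_two_right, Nat.add_sub_cancel,
      show (4 * k + 3 + 1) * (4 * k + 3) = 2 * (2 * ((k + 1) * (4 * k + 3))) by ring,
      Nat.mul_div_cancel_left _ two_pos]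
    exact even_two_mul _
  rw [vol_mul_vol, hchoose.neg_one_pow, map_one]

theorem vol_mem_evenOdd_one (hr : Odd r) : vol r ∈ evenOdd (Qr r) 1 := by
  have h := prod_map_ι_mem_evenOdd (Q := Qr r) (stdB r) (List.finRange r)
  rwa [List.length_finRange, hr.natCast_zmod_two] at h

theorem commute_vol_ι (hr : Odd r) (v : EuclideanSpace ℝ (Fin r)) :
    Commute (vol r) (ι (Qr r) v) := by
  refine commute_ι_of_basis (EuclideanSpace.basisFun (Fin r) ℝ).toBasis (fun j => ?_) v
  have hsign : (List.finRange r).countP (· != j) = r - 1 := by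
    rw [List.countP_eq_length_filter, ← (List.nodup_finRange r).erase_eq_filter,
      List.length_erase_of_mem (List.mem_finRange j), List.length_finRange]
  have h := ι_mul_prod_map_ι pairwise_isOrtho_stdB j (List.finRange r)
  rw [hsign, (Nat.Odd.sub_odd hr odd_one).neg_one_pow, one_smul] at h
  rw [OrthonormalBasis.coe_toBasis, EuclideanSpace.basisFun_apply]
  exact h.symm

end VolumeElement

/-- For `r ≡ 3 (mod 4)` there is a unital `ℝ`-algebra homomorphism
`F : Cl(Q_r) → Cl(Q_r)` with `F(ι(v)) = ω·ι(v)` for all `v`, whose image lies in the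
even subalgebra `Cl⁰(Q_r)`. -/
theorem statement9 {r : ℕ} (hr : r % 4 = 3) :
    ∃ F : CliffordAlgebra (Qr r) →ₐ[ℝ] CliffordAlgebra (Qr r),
      (∀ v : EuclideanSpace ℝ (Fin r), F (ι (Qr r) v) = vol r * ι (Qr r) v) ∧
      (∀ x : CliffordAlgebra (Qr r), F x ∈ CliffordAlgebra.even (Qr r)) := by
  have hodd : Odd r := Nat.odd_iff.mpr (by omega)
  exact exists_algHom_ι_eq_mul_mem_even (vol_mem_evenOdd_one hodd) (commute_vol_ι hodd)
    (vol_mul_vol_eq_one hr)
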